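/- Let E(X,Y) be defined for X, Y ∈ ℂ³ by E(X,Y) = 4·Σ_{i=1}^{3}(|XᵢYᵢ|² − Re(Xᵢ²·conj(Yᵢ)²)) + (1/2)(|X₁Y₂|² + |X₂Y₁|²) + (1/2)(|X₂Y₃|² + |X₃Y₂|²) + (1/2)(|X₁Y₃|² + |X₃Y₁|²) + 4Re(X₁·conj(X₂)·conj(Y₁)·Y₂) − 5Re(X₁X₂·conj(Y₁)·conj(Y₂)) + 4Re(X₂·conj(X₃)·conj(Y₂)·Y₃) − 5Re(X₂X₃·conj(Y₂)·conj(Y₃)) − 5Re(X₁·conj(X₃)·conj(Y₁)·Y₃) + 4Re(X₁X₃·conj(Y₁)·conj(Y₃)). Then the vectors X = (1,1,1) and Y = (i,−i,i), which are linearly independent over ℝ in ℂ³, satisfy E(X,Y) = 0. -/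

import Mathlib

/-! At `X = (1,1,1)`, `Y = (i,−i,i)` every product `XᵢYⱼ` has modulus one, each diagonal summand
is `1 - (-1) = 2`, and the mixed terms contribute `4·(-1) - 5 + 4·(-1) - 5 - 5 + 4·(-1)`, so
`E(X,Y) = 24 + 3 - 27 = 0`. Independence over `ℝ` is read off the first coordinate, where the
two vectors are `1` and `i`. -/

open Complex

/-- The Riemannian sectional curvature numerator `R_{xyyx}` of the Wallach threefold, in terms
of the `(1,0)`-parts `X, Y ∈ ℂ³` of `x = X + X̄`, `y = Y + Ȳ`. -/
noncomputable def wallachSectional (X Y : Fin 3 → ℂ) : ℝ :=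
  4 * (∑ i : Fin 3, ((‖X i * Y i‖) ^ 2
        - (X i ^ 2 * (starRingEnd ℂ (Y i)) ^ 2).re))
    + (1 / 2) * ((‖X 0 * Y 1‖) ^ 2 + (‖X 1 * Y 0‖) ^ 2)
    + (1 / 2) * ((‖X 1 * Y 2‖) ^ 2 + (‖X 2 * Y 1‖) ^ 2)
    + (1 / 2) * ((‖X 0 * Y 2‖) ^ 2 + (‖X 2 * Y 0‖) ^ 2)
    + 4 * (X 0 * (starRingEnd ℂ (X 1)) * (starRingEnd ℂ (Y 0)) * Y 1).re
    - 5 * (X 0 * X 1 * (starRingEnd ℂ (Y 0)) * (starRingEnd ℂ (Y 1))).re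
    + 4 * (X 1 * (starRingEnd ℂ (X 2)) * (starRingEnd ℂ (Y 1)) * Y 2).re
    - 5 * (X 1 * X 2 * (starRingEnd ℂ (Y 1)) * (starRingEnd ℂ (Y 2))).re
    - 5 * (X 0 * (starRingEnd ℂ (X 2)) * (starRingEnd ℂ (Y 0)) * Y 2).re
    + 4 * (X 0 * X 2 * (starRingEnd ℂ (Y 0)) * (starRingEnd ℂ (Y 2))).re

theorem Complex.linearIndependent_pair_of_apply_eq_one_I {ι : Type*} {u v : ι → ℂ} (i : ι)
    (hu : u i = 1) (hv : v i = I) : LinearIndependent ℝ ![u, v] := by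
  rw [LinearIndependent.pair_iff]
  intro s t h
  simpa [hu, hv, Complex.ext_iff] using congrFun h i

/-- The vectors `X = (1,1,1)` and `Y = (i,−i,i)` are linearly independent over `ℝ` and satisfy
`E(X,Y) = 0`: the Wallach metric's sectional curvature is nonnegative but not strictly
positive. -/
theorem wallach_sectional_not_positive :
    LinearIndependent ℝ
      ![(![1, 1, 1] : Fin 3 → ℂ), (![Complex.I, -Complex.I, Complex.I] : Fin 3 → ℂ)]
    ∧ wallachSectional ![1, 1, 1] ![Complex.I, -Complex.I, Complex.I] = 0 :=
  ⟨Complex.linearIndependent_pair_of_apply_eq_one_I 0 rfl rfl,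
    by norm_num [wallachSectional, Fin.sum_univ_three, Matrix.cons_val_two]⟩
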